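/- For every natural number n, the number of words of length n+1 over {−1, 0, 0̄, 1} (with 0̄ valued 0) that sum to 0, have all partial sums nonnegative, and such that the partial sum before every occurrence of 0̄ is strictly positive, equals the number of words of length n over the same alphabet that sum to 0 and have all partial sums nonnegative. -/

import Mathlib

inductive Letter : Type
  | up | zero | zbar | down
deriving DecidableEq

def val : Letter → ℤ
  | .up => 1
  | .zero => 0
  | .zbar => 0
  | .down => -1

/-!
Count paths from an arbitrary starting height `h`, and let `0̄`-steps be allowed only from height
at least `c`: the words of the theorem are the paths from height `0` with `c = 1` and with `c = 0`
respectively. Splitting off the first letter gives, for `h ≥ 0`, the recurrence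
`N_c(k+1, h) = N_c(k, h+1) + N_c(k, h) + [c ≤ h] N_c(k, h) + N_c(k, h-1)`, and `N_c(k, h) = 0` for
`h < 0`. Induction on `k` then yields `N_1(k+1, h) = N_0(k, h-1) + N_0(k, h)` for every `h`, which
at `h = 0` is the theorem.
-/

theorem List.ncard_length_succ_eq_sum {α : Type*} [Fintype α] (P : List α → Prop) (k : ℕ) :
    {w | w.length = k + 1 ∧ P w}.ncard = ∑ a, {t | t.length = k ∧ P (a :: t)}.ncard := by
  have hunion : {w | w.length = k + 1 ∧ P w} = ⋃ a, cons a '' {t | t.length = k ∧ P (a :: t)} := by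
    ext (_ | ⟨a, t⟩) <;> simp
  rw [hunion, Set.ncard_iUnion_of_finite, finsum_eq_sum_of_fintype]
  · simp_rw [Set.ncard_image_of_injective _ cons_injective]
  · exact fun a => ((finite_length_eq α k).subset fun _ ht => ht.1).image _
  · intro a b hab
    simp only [Function.onFun, Set.disjoint_left]
    rintro _ ⟨t, -, rfl⟩ ⟨u, -, hu⟩
    exact hab (cons_eq_cons.mp hu).1.symm

instance : Fintype Letter where
  elems := {.up, .zero, .zbar, .down}
  complete a := by cases a <;> simp

theorem Letter.sum_univ {M : Type*} [AddCommMonoid M] (f : Letter → M) :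
    ∑ a, f a = f .up + f .zero + f .zbar + f .down := by
  simp [Finset.univ, Fintype.elems, add_assoc]

def IsMotzkin (c : ℤ) : ℤ → List Letter → Prop
  | h, [] => h = 0
  | h, a :: w => 0 ≤ h ∧ (a = .zbar → c ≤ h) ∧ IsMotzkin c (h + val a) w

theorem isMotzkin_iff {c h : ℤ} {w : List Letter} :
    IsMotzkin c h w ↔ h + (w.map val).sum = 0 ∧ (∀ p, p <+: w → 0 ≤ h + (p.map val).sum) ∧
      ∀ p t, w = p ++ .zbar :: t → c ≤ h + (p.map val).sum := by
  induction w generalizing h with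
  | nil => simp +contextual [IsMotzkin]
  | cons a w ih =>
    simp only [IsMotzkin, ih, List.prefix_cons_iff, List.cons_eq_append_iff, or_imp, forall_and,
      forall_exists_index, and_imp, forall_eq, List.map_nil, List.sum_nil, add_zero, List.map_cons,
      List.sum_cons, add_assoc]
    constructor
    · rintro ⟨h0, hz, hsum, hpre, hzbar⟩
      refine ⟨hsum, ⟨h0, ?_⟩, ?_, ?_⟩
      · rintro _ p rfl hp
        simpa using hpre p hp
      · rintro _ t rfl ⟨rfl, -⟩
        simpa using hz rfl
      · rintro _ t p rfl rfl
        simpa using hzbar p t rfl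
    · rintro ⟨hsum, ⟨h0, hpre⟩, hz, hzbar⟩
      refine ⟨h0, ?_, hsum, fun p hp => ?_, fun p t hw => ?_⟩
      · rintro rfl
        simpa using hz [] w rfl rfl
      · simpa [add_assoc] using hpre _ p rfl hp
      · simpa [add_assoc] using hzbar _ t p rfl hw

theorem isMotzkin_zero_iff {h : ℤ} {w : List Letter} :
    IsMotzkin 0 h w ↔ h + (w.map val).sum = 0 ∧ ∀ p, p <+: w → 0 ≤ h + (p.map val).sum := by
  rw [isMotzkin_iff, and_congr_right_iff]
  refine fun _ => ⟨And.left, fun hpre => ⟨hpre, fun p t hw => hpre p ?_⟩⟩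
  exact hw ▸ List.prefix_append _ _

theorem IsMotzkin.nonneg {c h : ℤ} {w : List Letter} (hw : IsMotzkin c h w) : 0 ≤ h := by
  cases w with
  | nil => exact hw.ge
  | cons a w => exact hw.1

noncomputable def numMotzkin (c : ℤ) (k : ℕ) (h : ℤ) : ℕ :=
  {w : List Letter | w.length = k ∧ IsMotzkin c h w}.ncard

theorem numMotzkin_of_neg {c h : ℤ} (k : ℕ) (hh : h < 0) : numMotzkin c k h = 0 := by
  have : {w : List Letter | w.length = k ∧ IsMotzkin c h w} = ∅ :=
    Set.eq_empty_of_forall_notMem fun _ hw => (hw.2.nonneg.trans_lt hh).false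
  rw [numMotzkin, this, Set.ncard_empty]

theorem numMotzkin_zero (c h : ℤ) : numMotzkin c 0 h = if h = 0 then 1 else 0 := by
  have : {w : List Letter | w.length = 0 ∧ IsMotzkin c h w} = if h = 0 then {[]} else ∅ := by
    ext w
    split_ifs <;> simp_all [IsMotzkin]
  rw [numMotzkin, this]
  split_ifs <;> simp

theorem numMotzkin_succ {c h : ℤ} (k : ℕ) (hh : 0 ≤ h) :
    numMotzkin c (k + 1) h = numMotzkin c k (h + 1) + numMotzkin c k h +
      (if c ≤ h then numMotzkin c k h else 0) + numMotzkin c k (h - 1) := by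
  rw [numMotzkin, List.ncard_length_succ_eq_sum, Letter.sum_univ]
  split_ifs with hc <;> simp [numMotzkin, IsMotzkin, val, hh, hc, sub_eq_add_neg]

theorem numMotzkin_one_succ (k : ℕ) (h : ℤ) :
    numMotzkin 1 (k + 1) h = numMotzkin 0 k (h - 1) + numMotzkin 0 k h := by
  induction k generalizing h with
  | zero =>
    obtain hh | hh := lt_or_ge h 0
    · simp only [numMotzkin_of_neg _ hh, numMotzkin_zero]
      split_ifs <;> omega
    · simp only [numMotzkin_succ 0 hh, numMotzkin_zero]
      split_ifs <;> omega
  | succ k ih =>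
    obtain hh | hh := lt_or_ge h 0
    · rw [numMotzkin_of_neg _ hh, numMotzkin_of_neg _ hh, numMotzkin_of_neg _ (by omega)]
    rw [numMotzkin_succ _ hh, ih, ih, ih, numMotzkin_succ k hh, if_pos hh, add_sub_cancel_right]
    obtain rfl | hpos := hh.eq_or_lt
    · simp only [numMotzkin_of_neg _ (by norm_num : (0 : ℤ) - 1 < 0),
        numMotzkin_of_neg _ (by norm_num : (0 : ℤ) - 1 - 1 < 0), if_neg (by norm_num : ¬(1 : ℤ) ≤ 0)]
      omega
    · rw [numMotzkin_succ k (by omega : 0 ≤ h - 1), if_pos (by omega : (0 : ℤ) ≤ h - 1),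
        if_pos (by omega : (1 : ℤ) ≤ h), sub_add_cancel]
      omega

theorem card_Gset'_eq_card_Gset (n : ℕ) :
    {w : List Letter | w.length = n + 1 ∧ (w.map val).sum = 0 ∧
      (∀ p, p <+: w → 0 ≤ (p.map val).sum) ∧
      ∀ p t, w = p ++ Letter.zbar :: t → 0 < (p.map val).sum}.ncard =
    {w : List Letter | w.length = n ∧ (w.map val).sum = 0 ∧
      ∀ p, p <+: w → 0 ≤ (p.map val).sum}.ncard := by
  calc _ = numMotzkin 1 (n + 1) 0 := by
        simp_rw [numMotzkin, isMotzkin_iff, zero_add, Order.one_le_iff_pos]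
    _ = numMotzkin 0 n 0 := by
        rw [numMotzkin_one_succ, numMotzkin_of_neg n (by norm_num), zero_add]
    _ = _ := by simp_rw [numMotzkin, isMotzkin_zero_iff, zero_add]
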